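/- The map P ↦ l(P) is a bijection from the set of partial quivers of type A_n onto the collection of those subsets S of [1, n+1] that are neither an initial segment [1, j] (0 ≤ j ≤ n+1, including the empty set and all of [1,n+1]) nor a final segment [j, n+1] (1 ≤ j ≤ n+1). -/

import Mathlib

/-!
Common definitions: type `A_n` combinatorics of reduced words for the longest
element, partial quivers, chamber sets, Lusztig cones, the rectangle diagrams
`D(P)` and `D(j)`, the sets `S(P)`, `S(j)`, `S(x)`, and Reineke's description
of Kashiwara's operators.
-/

noncomputable section

namespace Paper

attribute [local instance] Classical.propDecidable

/-! ### Partial quivers of type `A_n` -/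

/-- Edge symbols of a partial quiver: leftward arrow, rightward arrow, undirected. -/
inductive PQSym : Type
  | L : PQSym
  | R : PQSym
  | N : PQSym
deriving DecidableEq

/-- A partial quiver of type `A_n`: symbols on the edges `2, …, n` (numbered from the
right-hand end), with the directed edges forming a nonempty interval. -/
structure PartialQuiver (n : ℕ) : Type where
  edge : ℕ → PQSym
  undirected_outside : ∀ j : ℕ, j < 2 ∨ n < j → edge j = PQSym.N
  directed_nonempty : ∃ j : ℕ, edge j ≠ PQSym.N
  directed_interval : ∀ j j' j'' : ℕ, j ≤ j' → j' ≤ j'' →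
    edge j ≠ PQSym.N → edge j'' ≠ PQSym.N → edge j' ≠ PQSym.N

/-- A quiver: a partial quiver with no undirected edge. -/
def IsQuiver (n : ℕ) (Q : PartialQuiver n) : Prop :=
  ∀ j : ℕ, 2 ≤ j → j ≤ n → Q.edge j ≠ PQSym.N

/-- `P ≤ Q` : every directed edge of `P` carries the same symbol in `Q`. -/
def PQle (n : ℕ) (P Q : PartialQuiver n) : Prop :=
  ∀ j : ℕ, P.edge j ≠ PQSym.N → Q.edge j = P.edge j

/-- The edges `lo, lo+1, …, hi` form a component of `P` (a maximal run of equally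
oriented directed edges).  Its type is `P.edge lo`, and `a(Y) = lo - 1`,
`b(Y) = hi + 1`. -/
def IsComp (n : ℕ) (P : PartialQuiver n) (lo hi : ℕ) : Prop :=
  2 ≤ lo ∧ lo ≤ hi ∧ hi ≤ n ∧ P.edge lo ≠ PQSym.N ∧
    (∀ j : ℕ, lo ≤ j → j ≤ hi → P.edge j = P.edge lo) ∧
    P.edge (lo - 1) ≠ P.edge lo ∧ P.edge (hi + 1) ≠ P.edge lo

/-- The chamber set `l(P) ⊆ [1, n+1]` of a partial quiver:
`l₁(P) = {j : edge j is an L}`, `l₂(P) = [1, p-1]` if the rightmost directed edge is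
an `R` at position `p`, `l₃(P) = [q+1, n+1]` if the leftmost directed edge is an `R`
at position `q`. -/
def lset (n : ℕ) (P : PartialQuiver n) : Finset ℕ :=
  (Finset.Icc 1 (n + 1)).filter (fun m =>
    P.edge m = PQSym.L ∨
    (∃ p ∈ Finset.Icc 2 n, P.edge p = PQSym.R ∧
      (∀ q ∈ Finset.Icc 2 n, q < p → P.edge q = PQSym.N) ∧ m < p) ∨
    (∃ q ∈ Finset.Icc 2 n, P.edge q = PQSym.R ∧
      (∀ p' ∈ Finset.Icc 2 n, q < p' → P.edge p' = PQSym.N) ∧ q < m))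

/-! ### Reduced words for the longest element, positive roots, chamber sets -/

/-- The Coxeter generator `s_i`, acting as the transposition `(i, i+1)` of `ℕ`. -/
def sRefl (i : ℕ) : Equiv.Perm ℕ := Equiv.swap i (i + 1)

/-- The product `s_{i_1} s_{i_2} ⋯ s_{i_k}` of a word. -/
def wordProd (w : List ℕ) : Equiv.Perm ℕ := (w.map sRefl).prod

/-- `w` is a reduced expression for the longest element `w₀` of `W(A_n) = S_{n+1}`:
its letters lie in `[1,n]`, it has length `n(n+1)/2`, and its product is the
permutation `m ↦ n + 2 - m` of `[1, n+1]`. -/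
def IsRedWordW0 (n : ℕ) (w : List ℕ) : Prop :=
  (∀ i ∈ w, 1 ≤ i ∧ i ≤ n) ∧ w.length = n * (n + 1) / 2 ∧
    ∀ m : ℕ, 1 ≤ m → m ≤ n + 1 → wordProd w m = n + 2 - m

/-- The letter `i_r` of `w` (positions numbered from `1`). -/
def letterAt (w : List ℕ) (r : ℕ) : ℕ := w.getD (r - 1) 0

/-- The `r`-th positive root `α^r = s_{i_1} ⋯ s_{i_{r-1}} (α_{i_r})` determined by `w`,
recorded as the pair `(c, d)` with `c < d` for `α_{cd} = α_c + ⋯ + α_{d-1}`. -/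
def rootAt (w : List ℕ) (r : ℕ) : ℕ × ℕ :=
  (min (wordProd (w.take (r - 1)) (letterAt w r))
       (wordProd (w.take (r - 1)) (letterAt w r + 1)),
   max (wordProd (w.take (r - 1)) (letterAt w r))
       (wordProd (w.take (r - 1)) (letterAt w r + 1)))

/-- The chamber sets of the chamber diagram `CD(w)`: bounded chambers correspond to
minimal pairs `r < r'` (equal letters with no equal letter in between); the chamber
set of such a chamber is the set of strings passing below it, namely
`{(s_{i_1} ⋯ s_{i_r})(m) : i_r < m ≤ n+1}`. -/
def chamberSets (n : ℕ) (w : List ℕ) : Set (Finset ℕ) :=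
  { S | ∃ r r' : ℕ, 1 ≤ r ∧ r < r' ∧ r' ≤ w.length ∧ letterAt w r' = letterAt w r ∧
      (∀ p : ℕ, r < p → p < r' → letterAt w p ≠ letterAt w r) ∧
      S = (Finset.Icc (letterAt w r + 1) (n + 1)).image (wordProd (w.take r)) }

/-! ### The multisets `M(P)`, `M(j)` and the spanning vectors `v_P`, `v_j` -/

/-- The number `m_{cd}` of components `Y` of `P` with `α_{cd} ∈ M(Y)`, where
`M(Y) = {α_{cd} : 1 ≤ c ≤ a(Y) ≤ b(Y) ≤ d ≤ n+1}`. -/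
def compCount (n : ℕ) (P : PartialQuiver n) (c d : ℕ) : ℕ :=
  ((Finset.Icc 2 n ×ˢ Finset.Icc 2 n).filter (fun lh =>
    IsComp n P lh.1 lh.2 ∧ 1 ≤ c ∧ c ≤ lh.1 - 1 ∧ lh.2 + 1 ≤ d ∧ d ≤ n + 1)).card

/-- The multiplicity `⌈m_{cd}/2⌉` of `α_{cd}` in the multiset `M(P)`. -/
def multMP (n : ℕ) (P : PartialQuiver n) (c d : ℕ) : ℕ := (compCount n P c d + 1) / 2

/-- The spanning vector `v_P(w)`: its `r`-th entry is the multiplicity of `α^r` in `M(P)`. -/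
def vP (n : ℕ) (w : List ℕ) (P : PartialQuiver n) (r : ℕ) : ℕ :=
  if 1 ≤ r ∧ r ≤ w.length then multMP n P (rootAt w r).1 (rootAt w r).2 else 0

/-- The spanning vector `v_j(w)`: its `r`-th entry is the multiplicity of `α^r` in
`M(j) = {α_{cd} : c ≤ j < j+1 ≤ d}`. -/
def vj (n : ℕ) (w : List ℕ) (j r : ℕ) : ℕ :=
  if 1 ≤ r ∧ r ≤ w.length ∧ (rootAt w r).1 ≤ j ∧ j + 1 ≤ (rootAt w r).2 then 1 else 0

/-- The Lusztig cone `C_w ⊆ ℕ^k` (entries indexed by positions `1, …, k`). -/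
def LusztigCone (n : ℕ) (w : List ℕ) : Set (ℕ → ℕ) :=
  { a | (∀ r : ℕ, r = 0 ∨ w.length < r → a r = 0) ∧
      ∀ s s' : ℕ, 1 ≤ s → s < s' → s' ≤ w.length → letterAt w s' = letterAt w s →
        (∀ p : ℕ, s < p → p < s' → letterAt w p ≠ letterAt w s) →
        a s + a s' ≤ ∑ p ∈ (Finset.Ioo s s').filter
          (fun p => letterAt w p = letterAt w s + 1 ∨ letterAt w s = letterAt w p + 1), a p }

/-- A single commutation move: interchange adjacent letters `p, q` with `|p - q| > 1`. -/
def CommMove (w w' : List ℕ) : Prop :=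
  ∃ (u v : List ℕ) (p q : ℕ), (p + 1 < q ∨ q + 1 < p) ∧
    w = u ++ p :: q :: v ∧ w' = u ++ q :: p :: v

/-! ### Compatibility of a reduced word with a quiver -/

def flipSym : PQSym → PQSym
  | PQSym.L => PQSym.R
  | PQSym.R => PQSym.L
  | PQSym.N => PQSym.N

/-- Reverse all arrows incident to the vertex `v` (these are the edges `v` and `v+1`). -/
def reverseAt (Q : ℕ → PQSym) (v : ℕ) : ℕ → PQSym :=
  fun j => if j = v ∨ j = v + 1 then flipSym (Q j) else Q j

/-- The vertex `v ∈ [1,n]` is a sink (all incident arrows point into `v`). -/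
def IsSinkF (n : ℕ) (Q : ℕ → PQSym) (v : ℕ) : Prop :=
  1 ≤ v ∧ v ≤ n ∧ (2 ≤ v → Q v = PQSym.L) ∧ (v + 1 ≤ n → Q (v + 1) = PQSym.R)

def CompatibleAux (n : ℕ) : List ℕ → (ℕ → PQSym) → Prop
  | [], _ => True
  | i :: rest, Q => IsSinkF n Q i ∧ CompatibleAux n rest (reverseAt Q i)

/-- `w` is compatible with the quiver `Q`: `i_1` is a sink of `Q` and the rest of `w`
is compatible with the quiver obtained by reversing all arrows incident to `i_1`. -/
def Compatible (n : ℕ) (w : List ℕ) (Q : PartialQuiver n) : Prop :=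
  CompatibleAux n w Q.edge

/-! ### The piecewise-linear maps `T₂`, `T₃` -/

def T2 (x : ℕ × ℕ) : ℕ × ℕ := (x.2, x.1)

def T3 (x : ℤ × ℤ × ℤ) : ℤ × ℤ × ℤ :=
  (max x.2.2 (x.2.1 - x.1), x.1 + x.2.2, min x.1 (x.2.1 - x.2.2))

/-! ### The diagram `D(P)` -/

/-- The point `T + u·(-1,-1) + v·(1,-1)` of a rectangle with top corner `T`. -/
def rectPt (T : ℤ × ℤ) (u v : ℕ) : ℤ × ℤ :=
  (T.1 - (u : ℤ) + (v : ℤ), T.2 - (u : ℤ) - (v : ℤ))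

/-- `Tc` assigns to each component `(lo,hi)` of `P` the top corner of its rectangle
`ρ(Y)` (which has `a = lo - 1` rows in direction `(-1,-1)` and `n + 2 - b = n + 1 - hi`
columns in direction `(1,-1)`), so that whenever a component of type `L` is immediately
followed (on the right, i.e. at lower edge numbers) by one of type `R` their leftmost
corners coincide, and whenever one of type `R` is immediately followed by one of type
`L` their rightmost corners coincide. -/
def IsRealization (n : ℕ) (P : PartialQuiver n) (Tc : ℕ × ℕ → ℤ × ℤ) : Prop :=
  ∀ lo hi lo' hi' : ℕ, IsComp n P lo hi → IsComp n P lo' hi' → hi' + 1 = lo →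
    (P.edge lo = PQSym.L →
      rectPt (Tc (lo, hi)) (lo - 2) 0 = rectPt (Tc (lo', hi')) (lo' - 2) 0) ∧
    (P.edge lo = PQSym.R →
      rectPt (Tc (lo, hi)) 0 (n - hi) = rectPt (Tc (lo', hi')) 0 (n - hi'))

/-- `x` belongs to the rectangle of the component `(lo,hi)`. -/
def InRect (n : ℕ) (Tc : ℕ × ℕ → ℤ × ℤ) (lo hi : ℕ) (x : ℤ × ℤ) : Prop :=
  ∃ u v : ℕ, u ≤ lo - 2 ∧ v ≤ n - hi ∧ x = rectPt (Tc (lo, hi)) u v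

/-- The set of points of the diagram `D(P)`. -/
def pointsD (n : ℕ) (P : PartialQuiver n) (Tc : ℕ × ℕ → ℤ × ℤ) : Finset (ℤ × ℤ) :=
  ((Finset.Icc 2 n ×ˢ Finset.Icc 2 n).filter (fun lh => IsComp n P lh.1 lh.2)).biUnion
    (fun lh => (Finset.range (lh.1 - 1) ×ˢ Finset.range (n + 1 - lh.2)).image
      (fun uv => rectPt (Tc lh) uv.1 uv.2))

/-- The label of the top corner of the rectangle of `(lo,hi)`: `1` for type `L`,
`b - a = hi - lo + 2` for type `R`. -/
def baseOf (n : ℕ) (P : PartialQuiver n) (lo hi : ℕ) : ℕ :=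
  if P.edge lo = PQSym.L then 1 else hi - lo + 2

/-- The point `x` of `D(P)` carries the label `m`. -/
def HasLabel (n : ℕ) (P : PartialQuiver n) (Tc : ℕ × ℕ → ℤ × ℤ) (x : ℤ × ℤ) (m : ℕ) : Prop :=
  ∃ lo hi u v : ℕ, IsComp n P lo hi ∧ u ≤ lo - 2 ∧ v ≤ n - hi ∧
    x = rectPt (Tc (lo, hi)) u v ∧ m = baseOf n P lo hi + u + v

/-- The label of a point of `D(P)` (labels from different rectangles agree). -/
def labelD (n : ℕ) (P : PartialQuiver n) (Tc : ℕ × ℕ → ℤ × ℤ) (x : ℤ × ℤ) : ℕ :=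
  sInf { m | HasLabel n P Tc x m }

/-- The multiplicity `⌈t/2⌉` of a point, `t` being the number of rectangles containing it. -/
def multD (n : ℕ) (P : PartialQuiver n) (Tc : ℕ × ℕ → ℤ × ℤ) (x : ℤ × ℤ) : ℕ :=
  (((Finset.Icc 2 n ×ˢ Finset.Icc 2 n).filter (fun lh =>
      IsComp n P lh.1 lh.2 ∧ InRect n Tc lh.1 lh.2 x)).card + 1) / 2

/-- Diagonal rows of `D(P)` run in direction `(1,-1)`; they are the level sets of the key. -/
def keyOf (x : ℤ × ℤ) : ℤ := x.1 + x.2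

def maxKey (n : ℕ) (P : PartialQuiver n) (Tc : ℕ × ℕ → ℤ × ℤ) : ℤ :=
  WithBot.unbotD 0 ((pointsD n P Tc).image keyOf).max

def minKey (n : ℕ) (P : PartialQuiver n) (Tc : ℕ × ℕ → ℤ × ℤ) : ℤ :=
  WithTop.untopD 0 ((pointsD n P Tc).image keyOf).min

def maxX (n : ℕ) (P : PartialQuiver n) (Tc : ℕ × ℕ → ℤ × ℤ) : ℤ :=
  WithBot.unbotD 0 ((pointsD n P Tc).image Prod.fst).max

def minX (n : ℕ) (P : PartialQuiver n) (Tc : ℕ × ℕ → ℤ × ℤ) : ℤ :=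
  WithTop.untopD 0 ((pointsD n P Tc).image Prod.fst).min

def keyT (Tc : ℕ × ℕ → ℤ × ℤ) (lo hi : ℕ) : ℤ := keyOf (Tc (lo, hi))

def dT (Tc : ℕ × ℕ → ℤ × ℤ) (lo hi : ℕ) : ℤ := (Tc (lo, hi)).1 - (Tc (lo, hi)).2

/-- `c` is the key of a diagonal row of `D(P)`. -/
def IsCellRow (n : ℕ) (P : PartialQuiver n) (Tc : ℕ × ℕ → ℤ × ℤ) (c : ℤ) : Prop :=
  ∃ x ∈ pointsD n P Tc, keyOf x = c

/-- The rectangle of the component `(lo,hi)` meets the diagonal row with key `c`. -/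
def CoversRow (n : ℕ) (P : PartialQuiver n) (Tc : ℕ × ℕ → ℤ × ℤ) (lo hi : ℕ) (c : ℤ) : Prop :=
  IsComp n P lo hi ∧ keyT Tc lo hi - 2 * ((lo : ℤ) - 2) ≤ c ∧ c ≤ keyT Tc lo hi

/-- The lines in direction `(-1,-1)` bounding the rectangles which meet the diagonal
row with key `c` (recorded by their invariant `x - y`, offset by `±1` from the points). -/
def dEdges (n : ℕ) (P : PartialQuiver n) (Tc : ℕ × ℕ → ℤ × ℤ) (c : ℤ) : Finset ℤ :=
  ((Finset.Icc 2 n ×ˢ Finset.Icc 2 n).filter (fun lh => CoversRow n P Tc lh.1 lh.2 c)).biUnion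
    (fun lh => {dT Tc lh.1 lh.2 - 1, dT Tc lh.1 lh.2 + 2 * ((n : ℤ) - (lh.2 : ℤ)) + 1})

/-- The number of boxes in the row of boxes through the diagonal row with key `c`. -/
def boxCount (n : ℕ) (P : PartialQuiver n) (Tc : ℕ × ℕ → ℤ × ℤ) (c : ℤ) : ℕ :=
  (dEdges n P Tc c).card - 1

/-- `z` is (the key of) the central line `Z` of `D(P)`: it separates the diagonal rows
whose rows of boxes have box-numbers of one parity from those of the other parity. -/
def IsCentralLine (n : ℕ) (P : PartialQuiver n) (Tc : ℕ × ℕ → ℤ × ℤ) (z : ℤ) : Prop :=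
  minKey n P Tc < z ∧ z < maxKey n P Tc ∧
  (∀ c : ℤ, IsCellRow n P Tc c → c ≠ z) ∧
  (∀ c c' : ℤ, IsCellRow n P Tc c → IsCellRow n P Tc c' → z < c → z < c' →
    (Even (boxCount n P Tc c) ↔ Even (boxCount n P Tc c'))) ∧
  (∀ c c' : ℤ, IsCellRow n P Tc c → IsCellRow n P Tc c' → c < z → c' < z →
    (Even (boxCount n P Tc c) ↔ Even (boxCount n P Tc c'))) ∧
  (∀ c c' : ℤ, IsCellRow n P Tc c → IsCellRow n P Tc c' → c < z → z < c' →
    ¬ (Even (boxCount n P Tc c) ↔ Even (boxCount n P Tc c')))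

/-- `x` lies in `ρ*(Y)`: the part of the rectangle of `Y = (lo,hi)` on the same side
of the central line as its labelled corner (the rightmost corner for type `L`, the
leftmost corner for type `R`). -/
def InRhoStar (n : ℕ) (P : PartialQuiver n) (Tc : ℕ × ℕ → ℤ × ℤ) (z : ℤ)
    (lo hi : ℕ) (x : ℤ × ℤ) : Prop :=
  InRect n Tc lo hi x ∧
    (P.edge lo = PQSym.L → (z < keyOf x ↔ z < keyT Tc lo hi)) ∧
    (P.edge lo = PQSym.R → (z < keyOf x ↔ z < keyT Tc lo hi - 2 * ((lo : ℤ) - 2)))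

/-- The root `α_{cd}` arises from the component `Y = (lo,hi)` and the diagonal row with
key `k`: the intersection of that row with `ρ*(Y)` consists exactly of points labelled
`c, c+1, …, d-1` in order from top-left to bottom-right. -/
def ArisesFromY (n : ℕ) (P : PartialQuiver n) (Tc : ℕ × ℕ → ℤ × ℤ) (z : ℤ)
    (lo hi c d : ℕ) (k : ℤ) : Prop :=
  c < d ∧ ∃ p : ℤ × ℤ,
    ({ x : ℤ × ℤ | keyOf x = k ∧ InRhoStar n P Tc z lo hi x } =
      { y : ℤ × ℤ | ∃ t : ℕ, t ≤ d - c - 1 ∧ y = (p.1 + (t : ℤ), p.2 - (t : ℤ)) }) ∧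
    ∀ t : ℕ, t ≤ d - c - 1 → HasLabel n P Tc (p.1 + (t : ℤ), p.2 - (t : ℤ)) (c + t)

/-- The root `α_{cd}` arises from the diagonal row with key `k` (via some component). -/
def ArisesFrom (n : ℕ) (P : PartialQuiver n) (Tc : ℕ × ℕ → ℤ × ℤ) (z : ℤ)
    (c d : ℕ) (k : ℤ) : Prop :=
  ∃ lo hi : ℕ, IsComp n P lo hi ∧ ArisesFromY n P Tc z lo hi c d k

/-- The set `S(Y)` of positive roots of a component. -/
def SY (n : ℕ) (P : PartialQuiver n) (Tc : ℕ × ℕ → ℤ × ℤ) (z : ℤ) (lo hi : ℕ) :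
    Set (ℕ × ℕ) :=
  { cd | ∃ k : ℤ, ArisesFromY n P Tc z lo hi cd.1 cd.2 k }

/-- The set `S(P)` of positive roots. -/
def SP (n : ℕ) (P : PartialQuiver n) (Tc : ℕ × ℕ → ℤ × ℤ) (z : ℤ) : Set (ℕ × ℕ) :=
  { cd | ∃ k : ℤ, ArisesFrom n P Tc z cd.1 cd.2 k }

/-- `S₁(x)` for a point `x` of `D(P)` with label `m`: roots of `S(P)` arising from the
rows strictly above the row of `x`, together with those arising from the row of `x`
of the form `α_{cd}` with `c ≥ m`. -/
def S1x (n : ℕ) (P : PartialQuiver n) (Tc : ℕ × ℕ → ℤ × ℤ) (z : ℤ)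
    (x : ℤ × ℤ) (m : ℕ) : Set (ℕ × ℕ) :=
  { cd | (∃ k : ℤ, keyOf x < k ∧ ArisesFrom n P Tc z cd.1 cd.2 k) ∨
      (ArisesFrom n P Tc z cd.1 cd.2 (keyOf x) ∧ m ≤ cd.1) }

/-- `S₂(x)`: the roots `α_{md}` cut off from roots `α_{c'd} ∈ S(P)` arising from the
row of `x` with `c' < m`. -/
def S2x (n : ℕ) (P : PartialQuiver n) (Tc : ℕ × ℕ → ℤ × ℤ) (z : ℤ)
    (x : ℤ × ℤ) (m : ℕ) : Set (ℕ × ℕ) :=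
  { cd | cd.1 = m ∧ m < cd.2 ∧ ∃ c' : ℕ, c' < m ∧ ArisesFrom n P Tc z c' cd.2 (keyOf x) }

/-- `S(x) = S₁(x) ∪ S₂(x)`. -/
def Sx (n : ℕ) (P : PartialQuiver n) (Tc : ℕ × ℕ → ℤ × ℤ) (z : ℤ)
    (x : ℤ × ℤ) (m : ℕ) : Set (ℕ × ℕ) :=
  S1x n P Tc z x m ∪ S2x n P Tc z x m

/-! ### Reading off the diagram: the sequence `μ(P)` -/

/-- The labels (with multiplicity) of the points of the diagonal row of `D(P)` with key
`k` having `x`-coordinate `≥ xlo`, read from top-left to bottom-right. -/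
def rowListP (n : ℕ) (P : PartialQuiver n) (Tc : ℕ × ℕ → ℤ × ℤ) (k : ℤ) (xlo : ℤ) :
    List ℕ :=
  ((List.range ((maxX n P Tc - minX n P Tc).toNat + 1)).map
      (fun t => minX n P Tc + (t : ℤ))).flatMap
    (fun xx => if xlo ≤ xx ∧ (xx, k - xx) ∈ pointsD n P Tc then
        List.replicate (multD n P Tc (xx, k - xx)) (labelD n P Tc (xx, k - xx)) else [])

/-- The sequence `μ(P)`: the diagonal rows read from the last (bottom left) to the
first (top right), each row from top-left to bottom-right, labels repeated according
to multiplicity. -/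
def muP (n : ℕ) (P : PartialQuiver n) (Tc : ℕ × ℕ → ℤ × ℤ) : List ℕ :=
  ((List.range ((maxKey n P Tc - minKey n P Tc).toNat + 1)).map
      (fun t => minKey n P Tc + (t : ℤ))).flatMap
    (fun k => rowListP n P Tc k (minX n P Tc))

/-- The list of operator indices applied (in order of application) to reach the point
`x`: the rows `1, …, a-1` in turn, each read from its bottom-right end to its top-left
end, then the row of `x` from its bottom-right end up to and including `x`. -/
def opsTo (n : ℕ) (P : PartialQuiver n) (Tc : ℕ × ℕ → ℤ × ℤ) (x : ℤ × ℤ) : List ℕ :=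
  (((List.range (((maxKey n P Tc - keyOf x) / 2).toNat)).map
      (fun t => maxKey n P Tc - 2 * (t : ℤ))).flatMap
    (fun k => (rowListP n P Tc k (minX n P Tc)).reverse)) ++
  (rowListP n P Tc (keyOf x) x.1).reverse

/-- The word whose letters are, for `r = 1, …, k` in order, the letter `i_r` of `w`
repeated `(v_P)_r` times. -/
def FwordP (n : ℕ) (w : List ℕ) (P : PartialQuiver n) : List ℕ :=
  (List.range w.length).flatMap (fun r0 => List.replicate (vP n w P (r0 + 1)) (letterAt w (r0 + 1)))

/-- The word whose letters are, for `r = 1, …, k` in order, the letter `i_r` of `w`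
repeated `(v_j)_r` times. -/
def FwordJ (n : ℕ) (w : List ℕ) (j : ℕ) : List ℕ :=
  (List.range w.length).flatMap (fun r0 => List.replicate (vj n w j (r0 + 1)) (letterAt w (r0 + 1)))

/-! ### The diagram `D(j)`, `j ∈ [1,n]` : a single type `L` rectangle with
`a = j`, `b = j + 1`. -/

def InRectJ (n j : ℕ) (T0 : ℤ × ℤ) (x : ℤ × ℤ) : Prop :=
  ∃ u v : ℕ, u < j ∧ v < n + 1 - j ∧ x = rectPt T0 u v

def pointsDJ (n j : ℕ) (T0 : ℤ × ℤ) : Finset (ℤ × ℤ) :=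
  (Finset.range j ×ˢ Finset.range (n + 1 - j)).image (fun uv => rectPt T0 uv.1 uv.2)

def HasLabelJ (n j : ℕ) (T0 : ℤ × ℤ) (x : ℤ × ℤ) (m : ℕ) : Prop :=
  ∃ u v : ℕ, u < j ∧ v < n + 1 - j ∧ x = rectPt T0 u v ∧ m = 1 + u + v

def labelDJ (n j : ℕ) (T0 : ℤ × ℤ) (x : ℤ × ℤ) : ℕ :=
  sInf { m | HasLabelJ n j T0 x m }

def maxKeyJ (n j : ℕ) (T0 : ℤ × ℤ) : ℤ := WithBot.unbotD 0 ((pointsDJ n j T0).image keyOf).max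
def minKeyJ (n j : ℕ) (T0 : ℤ × ℤ) : ℤ := WithTop.untopD 0 ((pointsDJ n j T0).image keyOf).min
def maxXJ (n j : ℕ) (T0 : ℤ × ℤ) : ℤ := WithBot.unbotD 0 ((pointsDJ n j T0).image Prod.fst).max
def minXJ (n j : ℕ) (T0 : ℤ × ℤ) : ℤ := WithTop.untopD 0 ((pointsDJ n j T0).image Prod.fst).min

/-- `α_{cd}` arises from the diagonal row of `D(j)` with key `k`: that row consists
exactly of points labelled `c, …, d-1` in order. -/
def ArisesJ (n j : ℕ) (T0 : ℤ × ℤ) (c d : ℕ) (k : ℤ) : Prop :=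
  c < d ∧ ∃ p : ℤ × ℤ,
    ({ x : ℤ × ℤ | keyOf x = k ∧ InRectJ n j T0 x } =
      { y : ℤ × ℤ | ∃ t : ℕ, t ≤ d - c - 1 ∧ y = (p.1 + (t : ℤ), p.2 - (t : ℤ)) }) ∧
    ∀ t : ℕ, t ≤ d - c - 1 → HasLabelJ n j T0 (p.1 + (t : ℤ), p.2 - (t : ℤ)) (c + t)

def SJ (n j : ℕ) (T0 : ℤ × ℤ) : Set (ℕ × ℕ) :=
  { cd | ∃ k : ℤ, ArisesJ n j T0 cd.1 cd.2 k }

def S1xJ (n j : ℕ) (T0 : ℤ × ℤ) (x : ℤ × ℤ) (m : ℕ) : Set (ℕ × ℕ) :=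
  { cd | (∃ k : ℤ, keyOf x < k ∧ ArisesJ n j T0 cd.1 cd.2 k) ∨
      (ArisesJ n j T0 cd.1 cd.2 (keyOf x) ∧ m ≤ cd.1) }

def S2xJ (n j : ℕ) (T0 : ℤ × ℤ) (x : ℤ × ℤ) (m : ℕ) : Set (ℕ × ℕ) :=
  { cd | cd.1 = m ∧ m < cd.2 ∧ ∃ c' : ℕ, c' < m ∧ ArisesJ n j T0 c' cd.2 (keyOf x) }

def SxJ (n j : ℕ) (T0 : ℤ × ℤ) (x : ℤ × ℤ) (m : ℕ) : Set (ℕ × ℕ) :=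
  S1xJ n j T0 x m ∪ S2xJ n j T0 x m

/-- The sequence `μ(j)`: rows of `D(j)` from bottom-left to top-right, each row from
top-left to bottom-right (all multiplicities are `1`). -/
def muJ (n j : ℕ) : List ℕ :=
  (List.range j).flatMap (fun t => (List.range (n + 1 - j)).map (fun v => 1 + (j - 1 - t) + v))

def rowListJ (n j : ℕ) (T0 : ℤ × ℤ) (k : ℤ) (xlo : ℤ) : List ℕ :=
  ((List.range ((maxXJ n j T0 - minXJ n j T0).toNat + 1)).map
      (fun t => minXJ n j T0 + (t : ℤ))).flatMap
    (fun xx => if xlo ≤ xx ∧ (xx, k - xx) ∈ pointsDJ n j T0 then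
        [labelDJ n j T0 (xx, k - xx)] else [])

def opsToJ (n j : ℕ) (T0 : ℤ × ℤ) (x : ℤ × ℤ) : List ℕ :=
  (((List.range (((maxKeyJ n j T0 - keyOf x) / 2).toNat)).map
      (fun t => maxKeyJ n j T0 - 2 * (t : ℤ))).flatMap
    (fun k => (rowListJ n j T0 k (minXJ n j T0)).reverse)) ++
  (rowListJ n j T0 (keyOf x) x.1).reverse

/-! ### Reineke's description of the Kashiwara operators -/

/-- `f_{ij} = Σ_{l=j}^{n+1} v_{il} - Σ_{l=j+1}^{n+1} v_{i+1,l}`. -/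
def fRein (n : ℕ) (v : ℕ × ℕ → ℕ) (i j : ℕ) : ℤ :=
  (∑ l ∈ Finset.Icc j (n + 1), (v (i, l) : ℤ)) -
    ∑ l ∈ Finset.Icc (j + 1) (n + 1), (v (i + 1, l) : ℤ)

/-- The minimal `j ∈ (i, n+1]` at which `f_{ij}` is maximal. -/
def j0R (n : ℕ) (v : ℕ × ℕ → ℕ) (i : ℕ) : ℕ :=
  sInf { j : ℕ | i + 1 ≤ j ∧ j ≤ n + 1 ∧
    ∀ j' : ℕ, i + 1 ≤ j' → j' ≤ n + 1 → fRein n v i j' ≤ fRein n v i j }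

/-- The Reineke operator `F̃_i`: increase `v_{i,j₀}` by one and (if `j₀ > i + 1`)
decrease `v_{i+1,j₀}` by one. -/
def FRein (n i : ℕ) (v : ℕ × ℕ → ℕ) : ℕ × ℕ → ℕ := fun cd =>
  if cd = (i, j0R n v i) then v cd + 1
  else if cd = (i + 1, j0R n v i) ∧ i + 1 < j0R n v i then v cd - 1
  else v cd

/-- The `0/1` indicator vector of a set of positive roots. -/
def indVec (S : Set (ℕ × ℕ)) : ℕ × ℕ → ℕ := fun cd => if cd ∈ S then 1 else 0


/-! ### Auxiliary material for Statement 6 -/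

theorem pq_ext {n : ℕ} {P Q : PartialQuiver n} (h : P.edge = Q.edge) : P = Q := by
  cases P; cases Q
  have h' : _ = _ := h
  subst h'
  rfl

/-- The set of change points of a subset `S ⊆ [1, n+1]`. -/
def Ch (n : ℕ) (S : Finset ℕ) : Finset ℕ :=
  (Finset.Icc 2 (n + 1)).filter (fun m => ¬((m - 1 ∈ S) ↔ (m ∈ S)))

lemma Ch_bounds {n : ℕ} {S : Finset ℕ} {m : ℕ} (h : m ∈ Ch n S) :
    2 ≤ m ∧ m ≤ n + 1 := by
  simp only [Ch, Finset.mem_filter, Finset.mem_Icc] at h; exact h.1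

lemma Ch_change {n : ℕ} {S : Finset ℕ} {m : ℕ} (h : m ∈ Ch n S) :
    ¬((m - 1 ∈ S) ↔ (m ∈ S)) := by
  simp only [Ch, Finset.mem_filter, Finset.mem_Icc] at h; exact h.2

lemma mem_Ch {n : ℕ} {S : Finset ℕ} {m : ℕ} (h1 : 2 ≤ m) (h2 : m ≤ n + 1)
    (h3 : ¬((m - 1 ∈ S) ↔ (m ∈ S))) : m ∈ Ch n S := by
  simp only [Ch, Finset.mem_filter, Finset.mem_Icc]; exact ⟨⟨h1, h2⟩, h3⟩

/-- constancy between change points -/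
lemma chiConst {n : ℕ} (S : Finset ℕ) (a b : ℕ) (ha : 1 ≤ a) (hab : a ≤ b)
    (hb : b ≤ n + 1) (h : ∀ m, a < m → m ≤ b → m ∉ Ch n S) : (a ∈ S ↔ b ∈ S) := by
  induction b, hab using Nat.le_induction with
  | base => rfl
  | succ b hab ih =>
    have hb' : b ≤ n + 1 := by omega
    have ih' := ih hb' (fun m hm1 hm2 => h m hm1 (by omega))
    have hbc : b + 1 ∉ Ch n S := h (b + 1) (by omega) le_rfl
    have : ((b + 1 - 1 ∈ S) ↔ (b + 1 ∈ S)) := by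
      by_contra hc
      exact hbc (mem_Ch (by omega) (by omega) hc)
    simp only [Nat.add_sub_cancel] at this
    exact ih'.trans this

/-- The reconstruction of the edge function from a chamber set. -/
def Erec (n : ℕ) (S : Finset ℕ) : ℕ → PQSym := fun j =>
  if (∃ m ∈ Ch n S, m ≤ j) ∧ (∃ m ∈ Ch n S, j < m) then
    (if j ∈ S then PQSym.L else PQSym.R) else PQSym.N

/-- The directed edges of a partial quiver. -/
def Dset (n : ℕ) (P : PartialQuiver n) : Finset ℕ :=
  (Finset.Icc 2 n).filter (fun j => P.edge j ≠ PQSym.N)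

lemma Dset_ne (n : ℕ) (P : PartialQuiver n) : (Dset n P).Nonempty := by
  obtain ⟨j, hj⟩ := P.directed_nonempty
  refine ⟨j, ?_⟩
  simp only [Dset, Finset.mem_filter, Finset.mem_Icc]
  refine ⟨?_, hj⟩
  by_contra hc
  exact hj (P.undirected_outside j (by omega))

def pOf (n : ℕ) (P : PartialQuiver n) : ℕ := (Dset n P).min' (Dset_ne n P)
def qOf (n : ℕ) (P : PartialQuiver n) : ℕ := (Dset n P).max' (Dset_ne n P)

lemma pOf_mem (n : ℕ) (P : PartialQuiver n) : pOf n P ∈ Dset n P :=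
  Finset.min'_mem _ _
lemma qOf_mem (n : ℕ) (P : PartialQuiver n) : qOf n P ∈ Dset n P :=
  Finset.max'_mem _ _

lemma pOf_facts (n : ℕ) (P : PartialQuiver n) :
    2 ≤ pOf n P ∧ pOf n P ≤ n ∧ P.edge (pOf n P) ≠ PQSym.N := by
  have := pOf_mem n P
  simp only [Dset, Finset.mem_filter, Finset.mem_Icc] at this
  exact ⟨this.1.1, this.1.2, this.2⟩

lemma qOf_facts (n : ℕ) (P : PartialQuiver n) :
    2 ≤ qOf n P ∧ qOf n P ≤ n ∧ P.edge (qOf n P) ≠ PQSym.N := by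
  have := qOf_mem n P
  simp only [Dset, Finset.mem_filter, Finset.mem_Icc] at this
  exact ⟨this.1.1, this.1.2, this.2⟩

lemma pOf_le {n : ℕ} {P : PartialQuiver n} {j : ℕ} (h : j ∈ Dset n P) :
    pOf n P ≤ j := by unfold pOf; exact Finset.min'_le _ _ h

lemma le_qOf {n : ℕ} {P : PartialQuiver n} {j : ℕ} (h : j ∈ Dset n P) :
    j ≤ qOf n P := by unfold qOf; exact Finset.le_max' _ _ h

lemma pOf_le_qOf (n : ℕ) (P : PartialQuiver n) : pOf n P ≤ qOf n P :=
  le_qOf (pOf_mem n P)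

lemma edge_N_outside (n : ℕ) (P : PartialQuiver n) {j : ℕ}
    (h : j < pOf n P ∨ qOf n P < j) : P.edge j = PQSym.N := by
  by_cases hj : 2 ≤ j ∧ j ≤ n
  · by_contra hc
    have hjD : j ∈ Dset n P := by
      simp only [Dset, Finset.mem_filter, Finset.mem_Icc]; exact ⟨hj, hc⟩
    have g1 := pOf_le hjD
    have g2 := le_qOf hjD
    omega
  · exact P.undirected_outside j (by omega)

lemma edge_ne_N_between (n : ℕ) (P : PartialQuiver n) {j : ℕ}
    (h1 : pOf n P ≤ j) (h2 : j ≤ qOf n P) : P.edge j ≠ PQSym.N :=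
  P.directed_interval (pOf n P) j (qOf n P) h1 h2 (pOf_facts n P).2.2 (qOf_facts n P).2.2

lemma mem_lset_iff (n : ℕ) (P : PartialQuiver n) (m : ℕ) :
    m ∈ lset n P ↔ (1 ≤ m ∧ m ≤ n + 1) ∧
      (P.edge m = PQSym.L ∨ (P.edge (pOf n P) = PQSym.R ∧ m < pOf n P) ∨
        (P.edge (qOf n P) = PQSym.R ∧ qOf n P < m)) := by
  simp only [lset, Finset.mem_filter, Finset.mem_Icc]
  constructor
  · rintro ⟨hm, hL | ⟨p, hp, hpR, hbelow, hmp⟩ | ⟨q, hq, hqR, habove, hqm⟩⟩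
    · exact ⟨hm, Or.inl hL⟩
    · have hpD : p ∈ Dset n P := by
        simp only [Dset, Finset.mem_filter, Finset.mem_Icc]
        exact ⟨hp, by rw [hpR]; exact fun h => PQSym.noConfusion h⟩
      have h1 : pOf n P ≤ p := pOf_le hpD
      have h2 : p ≤ pOf n P := by
        by_contra hc
        exact (pOf_facts n P).2.2
          (hbelow (pOf n P) ⟨(pOf_facts n P).1, (pOf_facts n P).2.1⟩ (by omega))
      have : p = pOf n P := le_antisymm h2 h1
      subst this
      exact ⟨hm, Or.inr (Or.inl ⟨hpR, hmp⟩)⟩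
    · have hqD : q ∈ Dset n P := by
        simp only [Dset, Finset.mem_filter, Finset.mem_Icc]
        exact ⟨hq, by rw [hqR]; exact fun h => PQSym.noConfusion h⟩
      have h1 : q ≤ qOf n P := le_qOf hqD
      have h2 : qOf n P ≤ q := by
        by_contra hc
        exact (qOf_facts n P).2.2
          (habove (qOf n P) ⟨(qOf_facts n P).1, (qOf_facts n P).2.1⟩ (by omega))
      have : q = qOf n P := le_antisymm h1 h2
      subst this
      exact ⟨hm, Or.inr (Or.inr ⟨hqR, hqm⟩)⟩
  · rintro ⟨hm, hL | ⟨hpR, hmp⟩ | ⟨hqR, hqm⟩⟩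
    · exact ⟨hm, Or.inl hL⟩
    · refine ⟨hm, Or.inr (Or.inl ⟨pOf n P,
        ⟨(pOf_facts n P).1, (pOf_facts n P).2.1⟩, hpR, ?_, hmp⟩)⟩
      intro q hq hqp
      exact edge_N_outside n P (Or.inl hqp)
    · refine ⟨hm, Or.inr (Or.inr ⟨qOf n P,
        ⟨(qOf_facts n P).1, (qOf_facts n P).2.1⟩, hqR, ?_, hqm⟩)⟩
      intro p' hp' hqp'
      exact edge_N_outside n P (Or.inr hqp')

lemma chi_lt (n : ℕ) (P : PartialQuiver n) {m : ℕ} (hm : 1 ≤ m) (h : m < pOf n P) :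
    (m ∈ lset n P ↔ P.edge (pOf n P) = PQSym.R) := by
  rw [mem_lset_iff]
  have hmN : P.edge m = PQSym.N := edge_N_outside n P (Or.inl h)
  have hpq := pOf_le_qOf n P
  have hq := (qOf_facts n P).2.1
  constructor
  · rintro ⟨-, hL | ⟨hpR, -⟩ | ⟨-, hqm⟩⟩
    · rw [hmN] at hL; exact absurd hL (by simp)
    · exact hpR
    · omega
  · intro hpR
    exact ⟨⟨hm, by omega⟩, Or.inr (Or.inl ⟨hpR, h⟩)⟩

lemma chi_mid (n : ℕ) (P : PartialQuiver n) {m : ℕ} (h1 : pOf n P ≤ m)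
    (h2 : m ≤ qOf n P) : (m ∈ lset n P ↔ P.edge m = PQSym.L) := by
  rw [mem_lset_iff]
  have hp := (pOf_facts n P).1
  have hq := (qOf_facts n P).2.1
  constructor
  · rintro ⟨-, hL | ⟨-, hmp⟩ | ⟨-, hqm⟩⟩
    · exact hL
    · omega
    · omega
  · intro hL
    exact ⟨⟨by omega, by omega⟩, Or.inl hL⟩

lemma chi_gt (n : ℕ) (P : PartialQuiver n) {m : ℕ} (hm : m ≤ n + 1)
    (h : qOf n P < m) : (m ∈ lset n P ↔ P.edge (qOf n P) = PQSym.R) := by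
  rw [mem_lset_iff]
  have hmN : P.edge m = PQSym.N := edge_N_outside n P (Or.inr h)
  have hpq := pOf_le_qOf n P
  have hp := (pOf_facts n P).1
  constructor
  · rintro ⟨-, hL | ⟨-, hmp⟩ | ⟨hqR, -⟩⟩
    · rw [hmN] at hL; exact absurd hL (by simp)
    · omega
    · exact hqR
  · intro hqR
    exact ⟨⟨by omega, hm⟩, Or.inr (Or.inr ⟨hqR, h⟩)⟩

lemma pOf_mem_Ch (n : ℕ) (P : PartialQuiver n) : pOf n P ∈ Ch n (lset n P) := by
  have hp := pOf_facts n P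
  refine mem_Ch hp.1 (by omega) ?_
  have h1 : (pOf n P - 1 ∈ lset n P ↔ P.edge (pOf n P) = PQSym.R) :=
    chi_lt n P (by omega) (by omega)
  have h2 : (pOf n P ∈ lset n P ↔ P.edge (pOf n P) = PQSym.L) :=
    chi_mid n P le_rfl (pOf_le_qOf n P)
  rcases he : P.edge (pOf n P) with _ | _ | _ <;> rw [he] at h1 h2 <;> simp_all

lemma qOf_succ_mem_Ch (n : ℕ) (P : PartialQuiver n) :
    qOf n P + 1 ∈ Ch n (lset n P) := by
  have hq := qOf_facts n P
  refine mem_Ch (by omega) (by omega) ?_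
  have h1 : (qOf n P ∈ lset n P ↔ P.edge (qOf n P) = PQSym.L) :=
    chi_mid n P (pOf_le_qOf n P) le_rfl
  have h2 : (qOf n P + 1 ∈ lset n P ↔ P.edge (qOf n P) = PQSym.R) :=
    chi_gt n P (by omega) (by omega)
  simp only [Nat.add_sub_cancel]
  rcases he : P.edge (qOf n P) with _ | _ | _ <;> rw [he] at h1 h2 <;> simp_all

lemma Ch_lset_bounds (n : ℕ) (P : PartialQuiver n) {m : ℕ}
    (hm : m ∈ Ch n (lset n P)) : pOf n P ≤ m ∧ m ≤ qOf n P + 1 := by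
  have hb := Ch_bounds hm
  have hc := Ch_change hm
  constructor
  · by_contra hlt
    have h1 : (m - 1 ∈ lset n P ↔ P.edge (pOf n P) = PQSym.R) :=
      chi_lt n P (by omega) (by omega)
    have h2 : (m ∈ lset n P ↔ P.edge (pOf n P) = PQSym.R) :=
      chi_lt n P (by omega) (by omega)
    exact hc (h1.trans h2.symm)
  · by_contra hgt
    have h1 : (m - 1 ∈ lset n P ↔ P.edge (qOf n P) = PQSym.R) :=
      chi_gt n P (by omega) (by omega)
    have h2 : (m ∈ lset n P ↔ P.edge (qOf n P) = PQSym.R) :=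
      chi_gt n P (by omega) (by omega)
    exact hc (h1.trans h2.symm)

/-- Reconstruction: the edge function is recovered from the chamber set. -/
lemma Erec_lset (n : ℕ) (P : PartialQuiver n) : Erec n (lset n P) = P.edge := by
  funext j
  unfold Erec
  by_cases hj : pOf n P ≤ j ∧ j ≤ qOf n P
  · rw [if_pos ⟨⟨pOf n P, pOf_mem_Ch n P, hj.1⟩,
      ⟨qOf n P + 1, qOf_succ_mem_Ch n P, by omega⟩⟩]
    have hmid := chi_mid n P hj.1 hj.2
    have hne := edge_ne_N_between n P hj.1 hj.2
    by_cases hjS : j ∈ lset n P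
    · rw [if_pos hjS]; exact (hmid.mp hjS).symm
    · rw [if_neg hjS]
      rcases he : P.edge j with _ | _ | _
      · exact absurd (hmid.mpr he) hjS
      · rfl
      · exact absurd he hne
  · have hN : P.edge j = PQSym.N := edge_N_outside n P (by omega)
    have hcond : ¬((∃ m ∈ Ch n (lset n P), m ≤ j) ∧ (∃ m ∈ Ch n (lset n P), j < m)) := by
      rintro ⟨⟨m, hm, hmj⟩, ⟨m', hm', hjm'⟩⟩
      have b1 := Ch_lset_bounds n P hm
      have b2 := Ch_lset_bounds n P hm'
      omega
    rw [hN, if_neg hcond]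

/-- Change points of an initial segment. -/
lemma Ch_initial (n j : ℕ) {m : ℕ} (hm : m ∈ Ch n (Finset.Icc 1 j)) : m = j + 1 := by
  have hb := Ch_bounds hm
  have hc := Ch_change hm
  simp only [Finset.mem_Icc] at hc
  omega

/-- Change points of a final segment. -/
lemma Ch_final (n j : ℕ) {m : ℕ} (hm : m ∈ Ch n (Finset.Icc j (n + 1))) : m = j := by
  have hb := Ch_bounds hm
  have hc := Ch_change hm
  simp only [Finset.mem_Icc] at hc
  omega

set_option maxHeartbeats 1000000 in
/-- `P ↦ l(P)` is a bijection from the partial quivers of type `A_n` onto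
the subsets of `[1, n+1]` which are neither initial segments `[1, j]` (including `∅`
and all of `[1, n+1]`) nor final segments `[j, n+1]`. -/
theorem stmt6 (n : ℕ) (hn : 1 ≤ n) :
    Set.BijOn (fun P : PartialQuiver n => lset n P) Set.univ
      { S : Finset ℕ | S ⊆ Finset.Icc 1 (n + 1) ∧
          (∀ j : ℕ, j ≤ n + 1 → S ≠ Finset.Icc 1 j) ∧
          (∀ j : ℕ, 1 ≤ j → j ≤ n + 1 → S ≠ Finset.Icc j (n + 1)) } := by
  refine ⟨?_, ?_, ?_⟩
  · -- MapsTo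
    intro P _
    refine ⟨fun m hm => Finset.mem_Icc.mpr ((mem_lset_iff n P m).mp hm).1, ?_, ?_⟩
    · intro j hj heq
      have hp := pOf_mem_Ch n P
      have hq := qOf_succ_mem_Ch n P
      simp only at heq
      rw [heq] at hp hq
      have e1 := Ch_initial n j hp
      have e2 := Ch_initial n j hq
      have := pOf_le_qOf n P
      omega
    · intro j hj1 hj2 heq
      have hp := pOf_mem_Ch n P
      have hq := qOf_succ_mem_Ch n P
      simp only at heq
      rw [heq] at hp hq
      have e1 := Ch_final n j hp
      have e2 := Ch_final n j hq
      have := pOf_le_qOf n P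
      omega
  · -- InjOn
    intro P _ Q _ h
    simp only at h
    apply pq_ext
    rw [← Erec_lset n P, ← Erec_lset n Q]
    exact congrArg (Erec n) h
  · -- SurjOn
    intro S hS
    obtain ⟨hsub, h1, h2⟩ := hS
    -- Step 1: the change set is nonempty
    have hCne : (Ch n S).Nonempty := by
      by_contra hc
      rw [Finset.not_nonempty_iff_eq_empty] at hc
      have hconst : ∀ m, 1 ≤ m → m ≤ n + 1 → (1 ∈ S ↔ m ∈ S) := by
        intro m hm1 hm2
        exact chiConst (n := n) S 1 m le_rfl hm1 hm2
          (fun t _ _ ht => by rw [hc] at ht; exact absurd ht (Finset.notMem_empty t))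
      by_cases h1S : 1 ∈ S
      · refine h1 (n + 1) le_rfl (Finset.ext fun m => ?_)
        simp only [Finset.mem_Icc]
        constructor
        · intro hmS
          have := hsub hmS; simp only [Finset.mem_Icc] at this; exact this
        · intro hm
          exact (hconst m hm.1 hm.2).mp h1S
      · refine h1 0 (by omega) (Finset.ext fun m => ?_)
        simp only [Finset.mem_Icc]
        constructor
        · intro hmS
          have := hsub hmS; simp only [Finset.mem_Icc] at this
          exact absurd ((hconst m this.1 this.2).mpr hmS) h1S
        · intro hm
          exact absurd hm (by omega)
    set cm := (Ch n S).min' hCne with hcm_def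
    set cM := (Ch n S).max' hCne with hcM_def
    have hcm_mem : cm ∈ Ch n S := Finset.min'_mem _ _
    have hcM_mem : cM ∈ Ch n S := Finset.max'_mem _ _
    have hcm_b := Ch_bounds hcm_mem
    have hcM_b := Ch_bounds hcM_mem
    have hle : cm ≤ cM := Finset.min'_le _ _ hcM_mem
    -- Step 2: there are at least two change points
    have hlt : cm < cM := by
      rcases lt_or_eq_of_le hle with h | h
      · exact h
      exfalso
      have hall : ∀ m ∈ Ch n S, m = cm := by
        intro m hm
        have g1 : cm ≤ m := Finset.min'_le _ _ hm
        have g2 : m ≤ cM := Finset.le_max' _ _ hm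
        omega
      have hchg := Ch_change hcm_mem
      have hlow : ∀ m, 1 ≤ m → m ≤ cm - 1 → (m ∈ S ↔ cm - 1 ∈ S) := by
        intro m hm1 hm2
        exact chiConst (n := n) S m (cm - 1) hm1 hm2 (by omega)
          (fun t ht1 ht2 htc => by have := hall t htc; omega)
      have hhigh : ∀ m, cm ≤ m → m ≤ n + 1 → (cm ∈ S ↔ m ∈ S) := by
        intro m hm1 hm2
        exact chiConst (n := n) S cm m (by omega) hm1 hm2
          (fun t ht1 ht2 htc => by have := hall t htc; omega)
      by_cases hcmS : cm ∈ S
      · have hc1 : cm - 1 ∉ S := fun hh => hchg (iff_of_true hh hcmS)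
        refine h2 cm (by omega) (by omega) (Finset.ext fun m => ?_)
        simp only [Finset.mem_Icc]
        constructor
        · intro hmS
          have hmI := hsub hmS; simp only [Finset.mem_Icc] at hmI
          refine ⟨?_, hmI.2⟩
          by_contra hmc
          exact hc1 ((hlow m hmI.1 (by omega)).mp hmS)
        · intro hm
          exact (hhigh m hm.1 hm.2).mp hcmS
      · have hc1 : cm - 1 ∈ S := by
          by_contra hh; exact hchg (iff_of_false hh hcmS)
        refine h1 (cm - 1) (by omega) (Finset.ext fun m => ?_)
        simp only [Finset.mem_Icc]
        constructor
        · intro hmS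
          have hmI := hsub hmS; simp only [Finset.mem_Icc] at hmI
          refine ⟨hmI.1, ?_⟩
          by_contra hmc
          exact hcmS ((hhigh m (by omega) hmI.2).mpr hmS)
        · intro hm
          exact (hlow m hm.1 hm.2).mpr hc1
    -- Step 3: construct the partial quiver
    have hcond_iff : ∀ j, ((∃ m ∈ Ch n S, m ≤ j) ∧ (∃ m ∈ Ch n S, j < m)) ↔
        (cm ≤ j ∧ j < cM) := by
      intro j
      constructor
      · rintro ⟨⟨m, hm, hmj⟩, ⟨m', hm', hjm'⟩⟩
        have g1 : cm ≤ m := Finset.min'_le _ _ hm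
        have g2 : m' ≤ cM := Finset.le_max' _ _ hm'
        omega
      · rintro ⟨hj1, hj2⟩
        exact ⟨⟨cm, hcm_mem, hj1⟩, ⟨cM, hcM_mem, hj2⟩⟩
    have hEne : ∀ j, (Erec n S j ≠ PQSym.N) ↔ (cm ≤ j ∧ j < cM) := by
      intro j
      rw [← hcond_iff j]
      unfold Erec
      by_cases hc : (∃ m ∈ Ch n S, m ≤ j) ∧ (∃ m ∈ Ch n S, j < m)
      · rw [if_pos hc]
        refine iff_of_true ?_ hc
        by_cases hjS : j ∈ S
        · rw [if_pos hjS]; exact fun h => PQSym.noConfusion h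
        · rw [if_neg hjS]; exact fun h => PQSym.noConfusion h
      · rw [if_neg hc]
        exact iff_of_false (fun h => h rfl) hc
    have hEval : ∀ j, cm ≤ j → j < cM → (Erec n S j = PQSym.L ↔ j ∈ S) := by
      intro j hj1 hj2
      unfold Erec
      rw [if_pos ((hcond_iff j).mpr ⟨hj1, hj2⟩)]
      by_cases hjS : j ∈ S
      · rw [if_pos hjS]; exact iff_of_true rfl hjS
      · rw [if_neg hjS]; exact iff_of_false (fun h => PQSym.noConfusion h) hjS
    have hEvalR : ∀ j, cm ≤ j → j < cM → (Erec n S j = PQSym.R ↔ j ∉ S) := by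
      intro j hj1 hj2
      unfold Erec
      rw [if_pos ((hcond_iff j).mpr ⟨hj1, hj2⟩)]
      by_cases hjS : j ∈ S
      · rw [if_pos hjS]
        exact iff_of_false (fun h => PQSym.noConfusion h) (not_not_intro hjS)
      · rw [if_neg hjS]; exact iff_of_true rfl hjS
    have f1 : ∀ j : ℕ, j < 2 ∨ n < j → Erec n S j = PQSym.N := by
      intro j hj
      by_contra hc
      have := (hEne j).mp hc
      omega
    have f2 : ∃ j : ℕ, Erec n S j ≠ PQSym.N := ⟨cm, (hEne cm).mpr ⟨le_rfl, hlt⟩⟩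
    have f3 : ∀ j j' j'' : ℕ, j ≤ j' → j' ≤ j'' → Erec n S j ≠ PQSym.N →
        Erec n S j'' ≠ PQSym.N → Erec n S j' ≠ PQSym.N := by
      intro j j' j'' hjj' hj'j'' hj hj''
      rw [hEne] at hj hj'' ⊢
      omega
    set P : PartialQuiver n := ⟨Erec n S, f1, f2, f3⟩ with hP
    refine ⟨P, Set.mem_univ _, ?_⟩
    -- Step 4: lset n P = S
    have hDE : ∀ j, j ∈ Dset n P ↔ (cm ≤ j ∧ j < cM) := by
      intro j
      simp only [Dset, Finset.mem_filter, Finset.mem_Icc]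
      rw [hEne j]
      constructor
      · rintro ⟨-, h⟩; exact h
      · intro h; exact ⟨⟨by omega, by omega⟩, h⟩
    have hpcm : pOf n P = cm := by
      have g1 : cm ∈ Dset n P := (hDE cm).mpr ⟨le_rfl, hlt⟩
      have g2 := pOf_le g1
      have g3 := (hDE _).mp (pOf_mem n P)
      omega
    have hqcM : qOf n P = cM - 1 := by
      have g1 : cM - 1 ∈ Dset n P := (hDE _).mpr ⟨by omega, by omega⟩
      have g2 := le_qOf g1
      have g3 := (hDE _).mp (qOf_mem n P)
      omega
    simp only
    apply Finset.ext
    intro m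
    by_cases hmI : 1 ≤ m ∧ m ≤ n + 1
    · rcases lt_or_ge m cm with hm | hm
      · -- m below the directed part
        rw [chi_lt n P hmI.1 (by omega)]
        rw [hpcm]
        have he : P.edge cm = Erec n S cm := rfl
        rw [he, hEvalR cm le_rfl hlt]
        have hchg := Ch_change hcm_mem
        have hconst : m ∈ S ↔ cm - 1 ∈ S := by
          refine chiConst (n := n) S m (cm - 1) hmI.1 (by omega) (by omega) ?_
          intro t ht1 ht2 htc
          have g1 : cm ≤ t := Finset.min'_le _ _ htc
          omega
        tauto
      rcases lt_or_ge m cM with hm2 | hm2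
      · -- m in the directed part
        rw [chi_mid n P (by omega) (by omega)]
        have he : P.edge m = Erec n S m := rfl
        rw [he, hEval m hm hm2]
      · -- m above the directed part
        rw [chi_gt n P hmI.2 (by omega)]
        rw [hqcM]
        have he : P.edge (cM - 1) = Erec n S (cM - 1) := rfl
        rw [he, hEvalR (cM - 1) (by omega) (by omega)]
        have hchg := Ch_change hcM_mem
        have hconst : cM ∈ S ↔ m ∈ S := by
          refine chiConst (n := n) S cM m (by omega) hm2 hmI.2 ?_
          intro t ht1 ht2 htc
          have g1 : t ≤ cM := Finset.le_max' _ _ htc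
          omega
        tauto
    · constructor
      · intro h
        have := (mem_lset_iff n P m).mp h
        exact absurd this.1 hmI
      · intro h
        have := hsub h
        simp only [Finset.mem_Icc] at this
        exact absurd this hmI

end Paper
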